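/- Let a, b, c, p ∈ ℂ with c not a nonpositive integer. For n ∈ ℕ define v_n = ∑_{k=0}^{n} ((a)_k (b)_k / (k! · (c)_k)) · (−p)_{n−k} / (n−k)! (the Maclaurin coefficients of (1−z)^p · F(a,b;c;z)). Then v_0 = 1, v_1 = ab/c − p, and for every integer n ≥ 1, v_{n+1} = τ_n·v_n − ρ_n·v_{n−1}, where τ_n = (2n² + (a+b+c−2p−1)n + ab − cp)/((n+1)(n+c)) and ρ_n = (n+a−p−1)(n+b−p−1)/((n+1)(n+c)). -/

import Mathlib

open Finset

open Finset PowerSeries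

noncomputable def poch (w : ℂ) (k : ℕ) : ℂ := (ascPochhammer ℂ k).eval w

open PowerSeries

lemma poch_zero (w : ℂ) : poch w 0 = 1 := by simp [poch]
lemma poch_one (w : ℂ) : poch w 1 = w := by simp [poch]
lemma poch_succ (w : ℂ) (k : ℕ) : poch w (k+1) = poch w k * (w + k) := by
  simp [poch, ascPochhammer_succ_right]

-- abbreviation for derivative
noncomputable def dd (f : ℂ⟦X⟧) : ℂ⟦X⟧ := f.derivativeFun

lemma coeff_dd (f : ℂ⟦X⟧) (n : ℕ) : coeff n (dd f) = coeff (n+1) f * (n+1) :=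
  PowerSeries.coeff_derivativeFun f n

lemma coeff_X_dd (f : ℂ⟦X⟧) (n : ℕ) : coeff n (X * dd f) = n * coeff n f := by
  cases n with
  | zero => simp
  | succ m => rw [coeff_succ_X_mul, coeff_dd]; push_cast; ring

lemma coeff_X_X_dd (f : ℂ⟦X⟧) (n : ℕ) :
    coeff n (X * (X * dd (dd f))) = n * (n - 1) * coeff n f := by
  cases n with
  | zero => simp
  | succ m =>
    rw [coeff_succ_X_mul, coeff_X_dd, coeff_dd]
    push_cast; ring

section main
variable (a b c p : ℂ)

noncomputable def Useq (k : ℕ) : ℂ := poch a k * poch b k / ((Nat.factorial k : ℂ) * poch c k)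
noncomputable def Wseq (m : ℕ) : ℂ := poch (-p) m / (Nat.factorial m : ℂ)
noncomputable def US : ℂ⟦X⟧ := PowerSeries.mk (Useq a b c)
noncomputable def WS : ℂ⟦X⟧ := PowerSeries.mk (Wseq p)

lemma poch_c_ne (hc : ∀ k : ℕ, c + (k : ℂ) ≠ 0) (k : ℕ) : poch c k ≠ 0 := by
  induction k with
  | zero => simp [poch_zero]
  | succ m ih => rw [poch_succ]; exact mul_ne_zero ih (hc m)

lemma Useq_rec (hc : ∀ k : ℕ, c + (k : ℂ) ≠ 0) (k : ℕ) :
    ((k : ℂ) + 1) * (c + k) * Useq a b c (k + 1) = (a + k) * (b + k) * Useq a b c k := by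
  have hf : ((Nat.factorial k : ℂ)) ≠ 0 := Nat.cast_ne_zero.2 (Nat.factorial_ne_zero k)
  have hp := poch_c_ne c hc k
  have hck := hc k
  have hf' : ((Nat.factorial (k+1) : ℂ)) ≠ 0 := Nat.cast_ne_zero.2 (Nat.factorial_ne_zero _)
  have hp' : poch c (k+1) ≠ 0 := poch_c_ne c hc (k+1)
  have e1 : Useq a b c k * ((Nat.factorial k : ℂ) * poch c k) = poch a k * poch b k :=
    div_mul_cancel₀ _ (mul_ne_zero hf hp)
  have e2 : Useq a b c (k+1) * ((Nat.factorial (k+1) : ℂ) * poch c (k+1))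
      = poch a (k+1) * poch b (k+1) := div_mul_cancel₀ _ (mul_ne_zero hf' hp')
  rw [Nat.factorial_succ, poch_succ, poch_succ, poch_succ] at e2
  push_cast at e2
  apply mul_left_cancel₀ (mul_ne_zero hf hp)
  linear_combination e2 - (a + (k:ℂ)) * (b + (k:ℂ)) * e1

lemma Wseq_rec (m : ℕ) :
    ((m : ℂ) + 1) * Wseq p (m + 1) = ((m : ℂ) - p) * Wseq p m := by
  have hf : ((Nat.factorial m : ℂ)) ≠ 0 := Nat.cast_ne_zero.2 (Nat.factorial_ne_zero m)
  have hf' : ((Nat.factorial (m+1) : ℂ)) ≠ 0 := Nat.cast_ne_zero.2 (Nat.factorial_ne_zero _)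
  have e1 : Wseq p m * (Nat.factorial m : ℂ) = poch (-p) m := div_mul_cancel₀ _ hf
  have e2 : Wseq p (m+1) * (Nat.factorial (m+1) : ℂ) = poch (-p) (m+1) := div_mul_cancel₀ _ hf'
  rw [Nat.factorial_succ, poch_succ] at e2
  push_cast at e2
  apply mul_left_cancel₀ hf
  linear_combination e2 - ((m:ℂ) - p) * e1

lemma hW1 : dd (WS p) - X * dd (WS p) + C p * WS p = 0 := by
  ext n
  simp only [LinearMap.map_add, LinearMap.map_sub, coeff_C_mul, coeff_dd, coeff_X_dd,
    map_zero, WS, coeff_mk]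
  have := Wseq_rec p n
  linear_combination this

lemma hW2 : dd (dd (WS p)) - X * dd (dd (WS p)) - dd (WS p) + C p * dd (WS p) = 0 := by
  ext n
  simp only [LinearMap.map_add, LinearMap.map_sub, coeff_C_mul, coeff_dd, coeff_X_dd,
    map_zero, WS, coeff_mk]
  have := Wseq_rec p (n + 1)
  push_cast at this ⊢
  linear_combination ((n : ℂ) + 1) * this

lemma hU1 (hc : ∀ k : ℕ, c + (k : ℂ) ≠ 0) :
    X * dd (dd (US a b c)) + C c * dd (US a b c)
      - X * (X * dd (dd (US a b c))) - C (a + b + 1) * (X * dd (US a b c))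
      - C (a * b) * US a b c = 0 := by
  ext n
  simp only [LinearMap.map_add, LinearMap.map_sub, coeff_C_mul, coeff_dd, coeff_X_dd,
    coeff_X_X_dd, map_zero, US, coeff_mk]
  have := Useq_rec a b c hc n
  push_cast at this ⊢
  linear_combination this



lemma master (hc : ∀ k : ℕ, c + (k : ℂ) ≠ 0) :
    X * dd (dd (US a b c * WS p)) + C c * dd (US a b c * WS p)
      - C 2 * (X * (X * dd (dd (US a b c * WS p))))
      + C (2*p - a - b - 1 - c) * (X * dd (US a b c * WS p))
      + C (p*c - a*b) * (US a b c * WS p)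
      + X * (X * (X * dd (dd (US a b c * WS p)))
          + C (a + b + 1 - 2*p) * (X * dd (US a b c * WS p))
          + C (p^2 + a*b - p*a - p*b) * (US a b c * WS p)) = 0 := by
  have hV1 : dd (US a b c * WS p)
      = US a b c * dd (WS p) + WS p * dd (US a b c) := by
    rw [dd, PowerSeries.derivativeFun_mul, smul_eq_mul, smul_eq_mul]; rfl
  have hV2 : dd (dd (US a b c * WS p))
      = dd (dd (US a b c)) * WS p + 2 * (dd (US a b c) * dd (WS p))
        + US a b c * dd (dd (WS p)) := by
    rw [hV1, dd, PowerSeries.derivativeFun_add, PowerSeries.derivativeFun_mul,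
      PowerSeries.derivativeFun_mul, smul_eq_mul, smul_eq_mul, smul_eq_mul, smul_eq_mul]
    simp only [dd]
    ring
  have h1 := hU1 a b c hc
  have h2 := hW1 p
  have h3 := hW2 p
  have hC2 : C (2:ℂ) = (2:ℂ⟦X⟧) := map_ofNat _ 2
  simp only [hC2, map_sub, map_add, map_mul, map_one, map_pow] at h1 h2 h3 hV1 hV2 ⊢
  linear_combination ((1 - X) * WS p) * h1
    + (2 * X * (1 - X) * dd (US a b c) + (C c + (C p - C a - C b) * X) * US a b c) * h2
    + (X * (1 - X) * US a b c) * h3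
    + (X * (1 - X)^2) * hV2
    + ((C c + (2 * C p - C a - C b - 1) * X) * (1 - X)) * hV1

theorem stmt_5 (a b c p : ℂ) (hc : ∀ k : ℕ, c + (k : ℂ) ≠ 0)
    (v : ℕ → ℂ)
    (hv : ∀ n : ℕ, v n = ∑ k ∈ range (n + 1),
      poch a k * poch b k / ((Nat.factorial k : ℂ) * poch c k) *
        (poch (-p) (n - k) / (Nat.factorial (n - k) : ℂ))) :
    v 0 = 1 ∧
    v 1 = a * b / c - p ∧
    ∀ n : ℕ, 1 ≤ n →
      v (n + 1) =
        (2 * (n : ℂ) ^ 2 + (a + b + c - 2 * p - 1) * n + a * b - c * p) /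
            (((n : ℂ) + 1) * (n + c)) * v n
        - (n + a - p - 1) * (n + b - p - 1) / (((n : ℂ) + 1) * (n + c)) * v (n - 1) := by
  have hvc : ∀ k : ℕ, coeff k (US a b c * WS p) = v k := by
    intro k
    rw [PowerSeries.coeff_mul, Finset.Nat.sum_antidiagonal_eq_sum_range_succ_mk, hv k]
    exact Finset.sum_congr rfl fun i _ => by simp [US, WS, Useq, Wseq]
  refine ⟨?_, ?_, ?_⟩
  · rw [hv]; simp [poch_zero]
  · rw [hv]
    simp [Finset.sum_range_succ, poch_zero, poch_one]
    ring
  · intro n hn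
    obtain ⟨m, rfl⟩ : ∃ m, n = m + 1 := ⟨n - 1, (Nat.succ_pred_eq_of_pos hn).symm⟩
    have h := congrArg (coeff (m+1)) (master a b c p hc)
    simp only [LinearMap.map_add, LinearMap.map_sub, coeff_C_mul, coeff_succ_X_mul,
      coeff_X_dd, coeff_X_X_dd, coeff_dd, map_zero, hvc] at h
    simp only [show m+1+1 = m+2 from rfl] at h ⊢
    have hne1 : ((m:ℂ) + 1 + 1) ≠ 0 := by
      have h2 : ((m+2 : ℕ) : ℂ) ≠ 0 := Nat.cast_ne_zero.2 (by omega)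
      push_cast at h2
      intro h0; exact h2 (by linear_combination h0)
    have hne2 : ((m:ℂ) + 1 + c) ≠ 0 := by
      have h2 := hc (m+1); push_cast at h2
      intro h0; exact h2 (by linear_combination h0)
    simp only [Nat.add_sub_cancel]
    push_cast at h ⊢
    field_simp
    linear_combination h
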